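/- Let R be a Noetherian ring of prime characteristic p, I₁,…,I_t ⊆ R ideals, and J_• a p-family of ideals with I₁,…,I_t ⊆ √J₁. Setting V(p^e) = {a ∈ ℕ^t : I₁^{a₁}⋯I_t^{a_t} ⊄ J_{p^e}}, the limit lim_{e→∞} |V(p^e)|/p^{et} exists (as a real number). This limit is called the F-volume Vol_F^{J_•}(I₁,…,I_t). -/

import Mathlib

open Ideal Filter MeasureTheory

/-- The `q`-th Frobenius power of an ideal: the ideal generated by `q`-th powers of its
elements (used with `q = p ^ e`). -/
def Ideal.frobPow {R : Type*} [CommRing R] (J : Ideal R) (q : ℕ) : Ideal R :=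
  Ideal.span ((fun a => a ^ q) '' (J : Set R))

/-- The set `V` of exponent vectors `a ∈ ℕ^t` with `I₁^{a₁} ⋯ I_t^{a_t} ⊄ J'`. -/
def Vnu {R : Type*} [CommRing R] {t : ℕ} (I : Fin t → Ideal R) (J' : Ideal R) :
    Set (Fin t → ℕ) :=
  {a | ¬ (∏ i, I i ^ a i) ≤ J'}

/-!
For a finitely generated ideal `K` with `n` generators, a pigeonhole count on monomials gives
`K ^ (q * b + n * (q - 1)) ≤ (K ^ b)^[q]`. With a common such constant `c` for all `Iᵢ`, the
`p`-family property shows that `a ∈ V(p^(e+1))` forces `⌊(a - c) / p⌋ ∈ V(p^e)`, and `I ≤ √J₁`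
puts `V(p^e)` inside a box of side `O(p^e)`. Counting the fibres of `a ↦ ⌊(a - c) / p⌋` gives
`|V(p^(e+1))| ≤ p^t |V(p^e)| + O(p^((e+1)(t-1)))`, so the normalised counts decrease up to a
summable error, and hence converge.
-/

theorem natCast_mul_mul_pow_sub_one {K : Type*} [Field K] (t : ℕ) (x : K) {y : K} (hy : y ≠ 0) :
    (t : K) * (x * y) ^ (t - 1) = t * x ^ (t - 1) * y ^ t / y := by
  rcases t with _ | s
  · simp
  · rw [Nat.add_sub_cancel, pow_succ, mul_pow]
    field_simp

theorem exists_tendsto_of_le_add_of_summable {F ε : ℕ → ℝ} (hF : BddBelow (Set.range F))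
    (hε : Summable ε) (h : ∀ n, F (n + 1) ≤ F n + ε n) : ∃ L, Tendsto F atTop (nhds L) := by
  have hS := hε.hasSum.tendsto_sum_nat
  set G : ℕ → ℝ := fun n => F n - ∑ k ∈ Finset.range n, ε k
  have hG : Antitone G := antitone_nat_of_succ_le fun n => by
    simp only [G, Finset.sum_range_succ]
    linarith [h n]
  have hGbdd : BddBelow (Set.range G) := by
    obtain ⟨m, hm⟩ := hF
    obtain ⟨M, hM⟩ := hS.bddAbove_range
    refine ⟨m - M, ?_⟩
    rintro _ ⟨n, rfl⟩
    linarith [hm ⟨n, rfl⟩, hM ⟨n, rfl⟩]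
  exact ⟨_, by simpa [G] using (tendsto_atTop_ciInf hG hGbdd).add hS⟩

section Counting

variable {ι : Type*} [Fintype ι]

theorem finite_of_forall_lt {X : Set (ι → ℕ)} {N : ι → ℕ} (h : ∀ a ∈ X, ∀ j, a j < N j) :
    X.Finite := by
  classical
  exact (Fintype.piFinset fun j => Finset.range (N j)).finite_toSet.subset fun a ha => by
    simpa using h a ha

theorem ncard_le_prod_of_forall_lt {X : Set (ι → ℕ)} {N : ι → ℕ} (h : ∀ a ∈ X, ∀ j, a j < N j) :
    X.ncard ≤ ∏ j, N j := by
  classical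
  have hX : X ⊆ Fintype.piFinset fun j => Finset.range (N j) := fun a ha => by
    simpa using h a ha
  refine (Set.ncard_le_ncard hX).trans ?_
  rw [Set.ncard_coe_finset, Fintype.card_piFinset]
  simp

theorem ncard_le_pow_mul_add {V V' : Set (ι → ℕ)} {p c N : ℕ} (hp : 0 < p) (hV : V.Finite)
    (hbox : ∀ a ∈ V', ∀ j, a j < N) (hrec : ∀ a ∈ V', (fun i => (a i - c) / p) ∈ V) :
    V'.ncard ≤ p ^ Fintype.card ι * V.ncard + Fintype.card ι * (c * N ^ (Fintype.card ι - 1)) := by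
  classical
  set A := {a ∈ V' | ∀ i, c ≤ a i}
  set B : ι → Set (ι → ℕ) := fun i => {a ∈ V' | a i < c}
  have hcover : V' ⊆ A ∪ ⋃ i, B i := fun a ha => by
    by_cases h : ∀ i, c ≤ a i
    · exact Or.inl ⟨ha, h⟩
    · push Not at h
      obtain ⟨i, hi⟩ := h
      exact Or.inr (Set.mem_iUnion.2 ⟨i, ha, hi⟩)
  have hdigits : {r : ι → ℕ | ∀ i, r i < p}.ncard ≤ p ^ Fintype.card ι := by
    simpa using ncard_le_prod_of_forall_lt (X := {r : ι → ℕ | ∀ i, r i < p}) fun r hr => hr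
  have hA : A.ncard ≤ p ^ Fintype.card ι * V.ncard := by
    have hsub : A ⊆ (fun x : (ι → ℕ) × (ι → ℕ) => fun i => p * x.1 i + c + x.2 i) ''
        (V ×ˢ {r | ∀ i, r i < p}) := fun a ⟨ha, hca⟩ => by
      refine ⟨(fun i => (a i - c) / p, fun i => (a i - c) % p), ⟨hrec a ha, fun i => ?_⟩, ?_⟩
      · exact Nat.mod_lt _ hp
      · funext i
        have := Nat.div_add_mod (a i - c) p
        have := hca i
        simp only
        omega
    have hR : {r : ι → ℕ | ∀ i, r i < p}.Finite :=
      finite_of_forall_lt (N := fun _ => p) fun r hr => hr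
    calc A.ncard ≤ (V ×ˢ {r : ι → ℕ | ∀ i, r i < p}).ncard :=
          (Set.ncard_le_ncard hsub ((hV.prod hR).image _)).trans (Set.ncard_image_le (hV.prod hR))
      _ ≤ p ^ Fintype.card ι * V.ncard := by
          rw [Set.ncard_prod, mul_comm]
          exact Nat.mul_le_mul_right _ hdigits
  have hB : ∀ i, (B i).ncard ≤ c * N ^ (Fintype.card ι - 1) := fun i => by
    have := ncard_le_prod_of_forall_lt (X := B i) (N := Function.update (fun _ => N) i c)
      fun a ⟨ha, hai⟩ j => by
        rcases eq_or_ne j i with rfl | hj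
        · simpa using hai
        · simpa [hj] using hbox a ha j
    rwa [Finset.prod_update_of_mem (Finset.mem_univ i), Finset.prod_const,
      Finset.card_sdiff_of_subset (Finset.subset_univ _), Finset.card_singleton,
      Finset.card_univ] at this
  have hfin : (A ∪ ⋃ i, B i).Finite := (finite_of_forall_lt (N := fun _ => N) hbox).subset
    (Set.union_subset (fun a ha => ha.1) (Set.iUnion_subset fun i a ha => ha.1))
  calc V'.ncard ≤ (A ∪ ⋃ i, B i).ncard := Set.ncard_le_ncard hcover hfin
    _ ≤ A.ncard + ∑ i, (B i).ncard :=
      (Set.ncard_union_le _ _).trans (Nat.add_le_add_left (Set.ncard_iUnion_le_of_fintype B) _)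
    _ ≤ _ := by
      refine Nat.add_le_add hA ?_
      simpa only [Finset.sum_const, Finset.card_univ, smul_eq_mul] using
        Finset.sum_le_sum fun i (_ : i ∈ Finset.univ) => hB i

theorem exists_tendsto_ncard_div_pow {V : ℕ → Set (ι → ℕ)} {p c C : ℕ} (hp : 2 ≤ p)
    (hbox : ∀ e, ∀ a ∈ V e, ∀ i, a i < C * p ^ e)
    (hrec : ∀ e, ∀ a ∈ V (e + 1), (fun i => (a i - c) / p) ∈ V e) :
    ∃ L, Tendsto (fun e => ((V e).ncard : ℝ) / (p : ℝ) ^ (e * Fintype.card ι)) atTop (nhds L) := by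
  set t := Fintype.card ι
  have hp0 : (0 : ℝ) < p := by positivity
  have hp1 : (p : ℝ)⁻¹ < 1 := inv_lt_one_of_one_lt₀ (by exact_mod_cast hp)
  refine exists_tendsto_of_le_add_of_summable ⟨0, ?_⟩
    ((summable_geometric_of_lt_one (by positivity) hp1).mul_left (t * C ^ (t - 1) * c / p : ℝ))
    fun e => ?_
  · rintro _ ⟨e, rfl⟩
    positivity
  have hcount : ((V (e + 1)).ncard : ℝ) ≤
      p ^ t * (V e).ncard + t * (C * p ^ (e + 1)) ^ (t - 1) * c := by
    have := ncard_le_pow_mul_add (by omega)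
      (finite_of_forall_lt (N := fun _ => C * p ^ e) (hbox e)) (hbox (e + 1)) (hrec e)
    exact_mod_cast this.trans_eq (by ring)
  rw [natCast_mul_mul_pow_sub_one t _ (by positivity)] at hcount
  rw [div_le_iff₀ (by positivity)]
  refine hcount.trans_eq ?_
  rw [← pow_mul, add_one_mul, pow_add, inv_pow]
  field_simp
  ring

end Counting

namespace Ideal

variable {R : Type*} [CommRing R]

theorem pow_mem_frobPow {J : Ideal R} {x : R} (hx : x ∈ J) (q : ℕ) : x ^ q ∈ J.frobPow q :=
  subset_span ⟨x, hx, rfl⟩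

theorem frobPow_mono {J K : Ideal R} (h : J ≤ K) (q : ℕ) : J.frobPow q ≤ K.frobPow q :=
  span_mono (Set.image_mono h)

@[simp]
theorem frobPow_top (q : ℕ) : (⊤ : Ideal R).frobPow q = ⊤ :=
  (eq_top_iff_one _).2 (by simpa using pow_mem_frobPow (J := ⊤) (x := (1 : R)) trivial q)

theorem frobPow_mul_le (J K : Ideal R) (q : ℕ) :
    J.frobPow q * K.frobPow q ≤ (J * K).frobPow q := by
  rw [frobPow, frobPow, span_mul_span', span_le]
  rintro _ ⟨_, ⟨x, hx, rfl⟩, _, ⟨y, hy, rfl⟩, rfl⟩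
  show x ^ q * y ^ q ∈ _
  rw [← mul_pow]
  exact pow_mem_frobPow (mul_mem_mul hx hy) q

theorem prod_frobPow_le {ι : Type*} (s : Finset ι) (K : ι → Ideal R) (q : ℕ) :
    ∏ i ∈ s, (K i).frobPow q ≤ (∏ i ∈ s, K i).frobPow q := by
  classical
  induction s using Finset.induction with
  | empty => simp [one_eq_top]
  | insert i s hi ih =>
    rw [Finset.prod_insert hi, Finset.prod_insert hi]
    exact (mul_mono_right ih).trans (frobPow_mul_le _ _ q)

theorem frobPow_pow_le (K : Ideal R) (q b : ℕ) : K.frobPow q ^ b ≤ (K ^ b).frobPow q := by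
  simpa using prod_frobPow_le (Finset.univ : Finset (Fin b)) (fun _ => K) q

theorem prod_pow_mem_frobPow_pow {ι : Type*} {K : Ideal R} {s : Finset ι} {g : ι → R}
    (hg : ∀ x ∈ s, g x ∈ K) {q b : ℕ} (hq : 0 < q) {d : ι → ℕ}
    (hd : q * b + s.card * (q - 1) ≤ ∑ x ∈ s, d x) :
    ∏ x ∈ s, g x ^ d x ∈ K.frobPow q ^ b := by
  have hsplit : ∏ x ∈ s, g x ^ d x =
      (∏ x ∈ s, (g x ^ q) ^ (d x / q)) * ∏ x ∈ s, g x ^ (d x % q) := by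
    rw [← Finset.prod_mul_distrib]
    refine Finset.prod_congr rfl fun x _ => ?_
    rw [← pow_mul, ← pow_add, Nat.div_add_mod]
  have hb : b ≤ ∑ x ∈ s, d x / q := by
    have hmod : ∑ x ∈ s, d x ≤ ∑ x ∈ s, (q * (d x / q) + (q - 1)) :=
      Finset.sum_le_sum fun x _ => by
        have := Nat.div_add_mod (d x) q
        have := Nat.mod_lt (d x) hq
        omega
    rw [Finset.sum_add_distrib, ← Finset.mul_sum, Finset.sum_const, smul_eq_mul] at hmod
    exact Nat.le_of_mul_le_mul_left (by omega) hq
  rw [hsplit]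
  refine mul_mem_right _ _ (pow_le_pow_right hb ?_)
  rw [← Finset.prod_pow_eq_pow_sum]
  exact prod_mem_prod fun x hx => pow_mem_pow (pow_mem_frobPow (hg x hx) q) _

theorem span_pow_le_frobPow_pow (s : Finset R) {q : ℕ} (hq : 0 < q) (b : ℕ) :
    span (s : Set R) ^ (q * b + s.card * (q - 1)) ≤ (span (s : Set R)).frobPow q ^ b := by
  classical
  rw [span, Submodule.span_pow, Submodule.span_le]
  intro y hy
  obtain ⟨f, rfl⟩ := Set.mem_pow.1 hy
  set l := List.ofFn fun i => (f i : R)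
  have hl : l.toFinset ⊆ s := fun x hx => by
    obtain ⟨i, rfl⟩ := List.mem_ofFn.1 (List.mem_toFinset.1 hx)
    exact (f i).2
  rw [Finset.prod_list_count]
  refine prod_pow_mem_frobPow_pow (fun x hx => subset_span (hl hx)) hq ?_
  rw [List.sum_toFinset_count_eq_length, List.length_ofFn]
  have := Finset.card_le_card hl
  gcongr

theorem FG.exists_pow_le_frobPow {K : Ideal R} (hK : K.FG) {q : ℕ} (hq : 0 < q) :
    ∃ c, ∀ b, K ^ (q * b + c) ≤ (K ^ b).frobPow q := by
  obtain ⟨s, rfl⟩ := hK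
  exact ⟨_, fun b => (span_pow_le_frobPow_pow s hq b).trans (frobPow_pow_le _ q b)⟩

end Ideal

section PFamily

variable {R : Type*} [CommRing R] {t p c n : ℕ} {I : Fin t → Ideal R} {J : ℕ → Ideal R}

theorem pow_le_frobPow_pow_sub_div {K : Ideal R} (hK : ∀ b, K ^ (p * b + c) ≤ (K ^ b).frobPow p)
    (a : ℕ) : K ^ a ≤ (K ^ ((a - c) / p)).frobPow p := by
  rcases lt_or_ge a c with hac | hca
  · simp [Nat.sub_eq_zero_of_le hac.le, one_eq_top]
  · refine (pow_le_pow_right ?_).trans (hK _)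
    have := Nat.div_mul_le_self (a - c) p
    rw [mul_comm]
    omega

theorem sub_div_mem_Vnu_of_mem_Vnu_succ (hfam : ∀ e, (J e).frobPow p ≤ J (e + 1))
    (hc : ∀ i b, I i ^ (p * b + c) ≤ (I i ^ b).frobPow p) {e : ℕ} {a : Fin t → ℕ}
    (ha : a ∈ Vnu I (J (e + 1))) : (fun i => (a i - c) / p) ∈ Vnu I (J e) := fun hb =>
  ha <| calc
    ∏ i, I i ^ a i ≤ ∏ i, (I i ^ ((a i - c) / p)).frobPow p :=
      Finset.prod_le_prod' fun i _ => pow_le_frobPow_pow_sub_div (hc i) (a i)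
    _ ≤ (∏ i, I i ^ ((a i - c) / p)).frobPow p := prod_frobPow_le _ _ p
    _ ≤ (J e).frobPow p := frobPow_mono hb p
    _ ≤ J (e + 1) := hfam e

theorem exists_pow_le_of_pFamily (hp : 2 ≤ p) (hfam : ∀ e, (J e).frobPow p ≤ J (e + 1))
    (hc : ∀ i b, I i ^ (p * b + c) ≤ (I i ^ b).frobPow p) (hn : ∀ i, I i ^ n ≤ J 0) (e : ℕ) :
    ∃ m, m + c ≤ (n + c) * p ^ e ∧ ∀ i, I i ^ m ≤ J e := by
  induction e with
  | zero => exact ⟨n, by simp, hn⟩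
  | succ e ih =>
    obtain ⟨m, hm, hmJ⟩ := ih
    refine ⟨p * m + c, ?_, fun i => (hc i m).trans ((frobPow_mono (hmJ i) p).trans (hfam e))⟩
    calc p * m + c + c ≤ p * (m + c) := by nlinarith
      _ ≤ p * ((n + c) * p ^ e) := Nat.mul_le_mul_left p hm
      _ = (n + c) * p ^ (e + 1) := by ring

theorem lt_of_mem_Vnu (hp : 2 ≤ p) (hfam : ∀ e, (J e).frobPow p ≤ J (e + 1))
    (hc : ∀ i b, I i ^ (p * b + c) ≤ (I i ^ b).frobPow p) (hn : ∀ i, I i ^ n ≤ J 0) {e : ℕ}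
    {a : Fin t → ℕ} (ha : a ∈ Vnu I (J e)) (i : Fin t) : a i < (n + c) * p ^ e := by
  obtain ⟨m, hm, hmJ⟩ := exists_pow_le_of_pFamily hp hfam hc hn e
  by_contra! hle
  exact ha <| (le_of_dvd (Finset.dvd_prod_of_mem _ (Finset.mem_univ i))).trans
    ((pow_le_pow_right (by omega)).trans (hmJ i))

end PFamily

theorem stmt2_general {R : Type*} [CommRing R] [IsNoetherianRing R] (p : ℕ) [Fact p.Prime]
    {t : ℕ} (I : Fin t → Ideal R) (J : ℕ → Ideal R)
    (hfam : ∀ e, (J e).frobPow p ≤ J (e + 1))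
    (hrad : ∀ i, I i ≤ (J 0).radical) :
    ∃ V : ℝ, Tendsto (fun e : ℕ => ((Vnu I (J e)).ncard : ℝ) / (p : ℝ) ^ (e * t))
      atTop (nhds V) := by
  have hp : 2 ≤ p := (Fact.out : p.Prime).two_le
  choose c hc using fun i => FG.exists_pow_le_frobPow (IsNoetherian.noetherian (I i))
    (by omega : 0 < p)
  have hc_sup : ∀ i b, I i ^ (p * b + Finset.univ.sup c) ≤ (I i ^ b).frobPow p := fun i b =>
    (pow_le_pow_right (Nat.add_le_add_left (Finset.le_sup (Finset.mem_univ i)) _)).trans (hc i b)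
  obtain ⟨n, hn⟩ := exists_radical_pow_le_of_fg (J 0) (IsNoetherian.noetherian _)
  have hIn : ∀ i, I i ^ n ≤ J 0 := fun i => (pow_right_mono (hrad i) n).trans hn
  simpa using exists_tendsto_ncard_div_pow hp
    (fun e a ha i => lt_of_mem_Vnu hp hfam hc_sup hIn ha i)
    (fun e a ha => sub_div_mem_Vnu_of_mem_Vnu_succ hfam hc_sup ha)

/-- Existence of the F-volume: `lim_e |V(p^e)| / p^{e t}` converges. -/
theorem stmt2 {R : Type*} [CommRing R] [IsNoetherianRing R] (p : ℕ) [Fact p.Prime]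
    [CharP R p] {t : ℕ} (I : Fin t → Ideal R) (J : ℕ → Ideal R)
    (hfam : ∀ e, (J e).frobPow p ≤ J (e + 1))
    (hrad : ∀ i, I i ≤ (J 0).radical) :
    ∃ V : ℝ, Tendsto (fun e : ℕ => ((Vnu I (J e)).ncard : ℝ) / (p : ℝ) ^ (e * t))
      atTop (nhds V) :=
  stmt2_general p I J hfam hrad
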